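/- Let d2, a2, h, q > 0 and 0 ≤ x1 < L. If w is a solution of the upstream toxicant boundary value problem on [x1, L] and w(x) > 0 for all x ∈ [x1, L], then for every x ∈ [x1, L] one has w(x) ≥ ( h·(L − x1) / (a2 + q·(L − x1)) ) · exp(−(a2/d2)·(L − x1)). -/

import Mathlib

lemma exists_delta_pos' {f : ℝ → ℝ} (hf : Continuous f) {c b : ℝ} (hcb : c < b) (hfc : 0 < f c) :
    ∃ δ > 0, c + δ ≤ b ∧ ∀ x ∈ Set.Icc c (c + δ), 0 < f x := by
  have h1 : ∀ᶠ x in nhds c, 0 < f x := (hf.continuousAt (x := c)).eventually_mem (Ioi_mem_nhds hfc)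
  rw [Metric.eventually_nhds_iff] at h1
  obtain ⟨ε, hε, hball⟩ := h1
  have hm1 := min_le_left (ε/2) (b - c)
  have hm2 := min_le_right (ε/2) (b - c)
  refine ⟨min (ε/2) (b - c), lt_min (by linarith) (by linarith), by linarith, ?_⟩
  intro x hx
  apply hball
  rw [Real.dist_eq, abs_lt]
  exact ⟨by linarith [hx.1], by linarith [hx.2]⟩

lemma exists_delta_neg' {f : ℝ → ℝ} (hf : Continuous f) {a c : ℝ} (hac : a < c) (hfc : f c < 0) :
    ∃ δ > 0, a ≤ c - δ ∧ ∀ x ∈ Set.Icc (c - δ) c, f x < 0 := by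
  have h1 : ∀ᶠ x in nhds c, f x < 0 := (hf.continuousAt (x := c)).eventually_mem (Iio_mem_nhds hfc)
  rw [Metric.eventually_nhds_iff] at h1
  obtain ⟨ε, hε, hball⟩ := h1
  have hm1 := min_le_left (ε/2) (c - a)
  have hm2 := min_le_right (ε/2) (c - a)
  refine ⟨min (ε/2) (c - a), lt_min (by linarith) (by linarith), by linarith, ?_⟩
  intro x hx
  apply hball
  rw [Real.dist_eq, abs_lt]
  exact ⟨by linarith [hx.1], by linarith [hx.2]⟩

/-- `w` is a solution of the upstream toxicant boundary value problem with
parameters `d2, a2, h, q` on the interval `[x1, L]`. -/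
def IsUpstreamSolution (d2 a2 h q x1 L : ℝ) (w : ℝ → ℝ) : Prop :=
  ContDiff ℝ 2 w ∧
  (∀ x ∈ Set.Icc x1 L,
      d2 * deriv (deriv w) x - a2 * deriv w x + h - q * w x = 0) ∧
  d2 * deriv w x1 - a2 * w x1 = 0 ∧ deriv w L = 0

/-- explicit lower bound for a positive solution of the
upstream problem. -/
theorem upstream_explicit_lower_bound
    (d2 a2 h q x1 L : ℝ) (w : ℝ → ℝ)
    (hd2 : 0 < d2) (ha2 : 0 < a2) (hh : 0 < h) (hq : 0 < q)
    (hx1 : 0 ≤ x1) (hx1L : x1 < L)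
    (hw : IsUpstreamSolution d2 a2 h q x1 L w)
    (hpos : ∀ x ∈ Set.Icc x1 L, 0 < w x) :
    ∀ x ∈ Set.Icc x1 L,
      w x ≥ h * (L - x1) / (a2 + q * (L - x1)) *
        Real.exp (-(a2 / d2) * (L - x1)) := by
  obtain ⟨hC2, hODE, hBC1, hBC2⟩ := hw
  -- smoothness facts
  have hsm : Differentiable ℝ w ∧ Differentiable ℝ (deriv w) ∧ Continuous (deriv (deriv w)) := by
    have h2 : ContDiff ℝ ((1:ℕ∞)+1) w := by exact_mod_cast hC2
    rw [contDiff_succ_iff_deriv] at h2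
    obtain ⟨hd, -, h1⟩ := h2
    have h1' : ContDiff ℝ ((0:ℕ∞)+1) (deriv w) := by exact_mod_cast h1
    rw [contDiff_succ_iff_deriv] at h1'
    exact ⟨hd, h1'.1, h1'.2.2.continuous⟩
  obtain ⟨hdw, hdw1, hcw2⟩ := hsm
  have hcw : Continuous w := hdw.continuous
  have hcw1 : Continuous (deriv w) := hdw1.continuous
  have hmemx1 : x1 ∈ Set.Icc x1 L := Set.left_mem_Icc.2 hx1L.le
  have hmemL : L ∈ Set.Icc x1 L := Set.right_mem_Icc.2 hx1L.le
  -- F and its derivative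
  set F : ℝ → ℝ := fun x => d2 * deriv w x - a2 * w x with hFdef
  have hFd : ∀ x : ℝ, HasDerivAt F (d2 * deriv (deriv w) x - a2 * deriv w x) x := by
    intro x
    exact (((hdw1 x).hasDerivAt.const_mul d2).sub ((hdw x).hasDerivAt.const_mul a2))
  have hFdiff : Differentiable ℝ F := fun x => (hFd x).differentiableAt
  have hFderiv : ∀ x : ℝ, deriv F x = d2 * deriv (deriv w) x - a2 * deriv w x :=
    fun x => (hFd x).deriv
  have hFcont : Continuous F :=
    (continuous_const.mul hcw1).sub (continuous_const.mul hcw)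
  have hFdcont : Continuous (deriv F) := by
    have : deriv F = fun x => d2 * deriv (deriv w) x - a2 * deriv w x := funext hFderiv
    rw [this]
    exact (continuous_const.mul hcw2).sub (continuous_const.mul hcw1)
  have hODE' : ∀ x ∈ Set.Icc x1 L, deriv F x = q * w x - h := by
    intro x hx
    rw [hFderiv]
    have := hODE x hx
    linarith
  -- Claim A : the derivative of w is nonnegative on [x1, L]
  have claimA : ∀ x ∈ Set.Icc x1 L, 0 ≤ deriv w x := by
    by_contra hcon
    push_neg at hcon
    obtain ⟨b, hb, hbneg⟩ := hcon
    obtain ⟨c, hc, hmin⟩ := isCompact_Icc.exists_isMinOn (Set.nonempty_Icc.2 hx1L.le)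
      hcw1.continuousOn
    have hcneg : deriv w c < 0 := lt_of_le_of_lt (hmin hb) hbneg
    have hwx1pos : 0 < w x1 := hpos x1 hmemx1
    have hdwx1 : 0 < deriv w x1 := by nlinarith
    have hc1 : x1 < c := by
      rcases hc.1.lt_or_eq with h' | h'
      · exact h'
      · exfalso; rw [h'] at hdwx1; linarith
    have hc2 : c < L := by
      rcases hc.2.lt_or_eq with h' | h'
      · exact h'
      · exfalso; rw [h', hBC2] at hcneg; linarith
    have hdc : deriv (deriv w) c = 0 :=
      (hmin.isLocalMin (Icc_mem_nhds hc1 hc2)).deriv_eq_zero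
    set g : ℝ → ℝ := fun x => (a2 * deriv w x + q * w x - h) / d2 with hgdef
    have hode2 : ∀ x ∈ Set.Icc x1 L, deriv (deriv w) x = g x := by
      intro x hx
      have := hODE x hx
      simp only [hgdef]
      rw [eq_div_iff hd2.ne']
      linarith
    have hgc : g c = 0 := by rw [← hode2 c hc]; exact hdc
    have hgd : ∀ x : ℝ, HasDerivAt g ((a2 * deriv (deriv w) x + q * deriv w x) / d2) x := by
      intro x
      exact ((((hdw1 x).hasDerivAt.const_mul a2).add ((hdw x).hasDerivAt.const_mul q)).sub_const
        h).div_const d2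
    have hgcont : Continuous g :=
      (((continuous_const.mul hcw1).add (continuous_const.mul hcw)).sub
        continuous_const).div_const d2
    have hdgcont : Continuous (deriv g) := by
      have : deriv g = fun x => (a2 * deriv (deriv w) x + q * deriv w x) / d2 :=
        funext fun x => (hgd x).deriv
      rw [this]
      exact ((continuous_const.mul hcw2).add (continuous_const.mul hcw1)).div_const d2
    have hdgc : deriv g c < 0 := by
      rw [(hgd c).deriv, hdc]
      have : (a2 * 0 + q * deriv w c) / d2 = q * deriv w c / d2 := by ring
      rw [this]
      exact div_neg_of_neg_of_pos (by nlinarith) hd2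
    obtain ⟨δ, hδ, hδ1, hδ2⟩ := exists_delta_neg' hdgcont hc1 hdgc
    have hganti : StrictAntiOn g (Set.Icc (c - δ) c) := by
      apply strictAntiOn_of_deriv_neg (convex_Icc _ _) hgcont.continuousOn
      intro x hx
      rw [interior_Icc] at hx
      exact hδ2 x ⟨hx.1.le, hx.2.le⟩
    have hsub : Set.Icc (c - δ) c ⊆ Set.Icc x1 L := by
      intro x hx
      exact ⟨le_trans hδ1 hx.1, le_trans hx.2 hc2.le⟩
    have hmono : StrictMonoOn (deriv w) (Set.Icc (c - δ) c) := by
      apply strictMonoOn_of_deriv_pos (convex_Icc _ _) hcw1.continuousOn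
      intro x hx
      rw [interior_Icc] at hx
      have hxm : x ∈ Set.Icc (c - δ) c := ⟨hx.1.le, hx.2.le⟩
      rw [hode2 x (hsub hxm)]
      have := hganti hxm (Set.right_mem_Icc.2 (by linarith)) hx.2
      rw [hgc] at this
      exact this
    have hmem' : c - δ ∈ Set.Icc (c - δ) c := Set.left_mem_Icc.2 (by linarith)
    have h1 : deriv w (c - δ) < deriv w c :=
      hmono hmem' (Set.right_mem_Icc.2 (by linarith)) (by linarith)
    have h2 : deriv w c ≤ deriv w (c - δ) := hmin (hsub hmem')
    linarith
  -- Claim B : F is nonpositive on [x1, L]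
  have claimB : ∀ x ∈ Set.Icc x1 L, F x ≤ 0 := by
    by_contra hcon
    push_neg at hcon
    obtain ⟨b, hb, hbpos⟩ := hcon
    obtain ⟨c, hc, hmax⟩ := isCompact_Icc.exists_isMaxOn (Set.nonempty_Icc.2 hx1L.le)
      hFcont.continuousOn
    have hcpos : 0 < F c := lt_of_lt_of_le hbpos (hmax hb)
    have hFx1 : F x1 = 0 := by simp only [hFdef]; exact hBC1
    have hFL : F L < 0 := by
      simp only [hFdef, hBC2]
      nlinarith [hpos L hmemL]
    have hc1 : x1 < c := by
      rcases hc.1.lt_or_eq with h' | h'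
      · exact h'
      · exfalso; rw [← h', hFx1] at hcpos; linarith
    have hc2 : c < L := by
      rcases hc.2.lt_or_eq with h' | h'
      · exact h'
      · exfalso; rw [h'] at hcpos; linarith
    have hdc : deriv F c = 0 :=
      (hmax.isLocalMax (Icc_mem_nhds hc1 hc2)).deriv_eq_zero
    set g : ℝ → ℝ := fun x => q * w x - h with hgdef
    have hgc : g c = 0 := by show q * w c - h = 0; rw [← hODE' c hc]; exact hdc
    have hgd : ∀ x : ℝ, HasDerivAt g (q * deriv w x) x := by
      intro x
      exact ((hdw x).hasDerivAt.const_mul q).sub_const h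
    have hgcont : Continuous g := (continuous_const.mul hcw).sub continuous_const
    have hdgcont : Continuous (deriv g) := by
      have : deriv g = fun x => q * deriv w x := funext fun x => (hgd x).deriv
      rw [this]
      exact continuous_const.mul hcw1
    have hdwc : 0 < deriv w c := by
      simp only [hFdef] at hcpos
      have := hpos c hc
      nlinarith
    have hdgc : 0 < deriv g c := by
      rw [(hgd c).deriv]
      positivity
    obtain ⟨δ, hδ, hδ1, hδ2⟩ := exists_delta_pos' hdgcont hc2 hdgc
    have hsub : Set.Icc c (c + δ) ⊆ Set.Icc x1 L := fun x hx =>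
      ⟨le_trans hc1.le hx.1, le_trans hx.2 hδ1⟩
    have hgmono : StrictMonoOn g (Set.Icc c (c + δ)) := by
      apply strictMonoOn_of_deriv_pos (convex_Icc _ _) hgcont.continuousOn
      intro x hx
      rw [interior_Icc] at hx
      exact hδ2 x ⟨hx.1.le, hx.2.le⟩
    have hFmono : StrictMonoOn F (Set.Icc c (c + δ)) := by
      apply strictMonoOn_of_deriv_pos (convex_Icc _ _) hFcont.continuousOn
      intro x hx
      rw [interior_Icc] at hx
      have hxm : x ∈ Set.Icc c (c + δ) := ⟨hx.1.le, hx.2.le⟩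
      rw [hODE' x (hsub hxm)]
      have := hgmono (Set.left_mem_Icc.2 (by linarith)) hxm hx.1
      rw [hgc] at this
      exact this
    have hmem' : c + δ ∈ Set.Icc c (c + δ) := Set.right_mem_Icc.2 (by linarith)
    have h1 : F c < F (c + δ) :=
      hFmono (Set.left_mem_Icc.2 (by linarith)) hmem' (by linarith)
    have h2 : F (c + δ) ≤ F c := hmax (hsub hmem')
    linarith
  -- monotonicity of w
  have hmono : MonotoneOn w (Set.Icc x1 L) := by
    apply monotoneOn_of_deriv_nonneg (convex_Icc _ _) hcw.continuousOn
      hdw.differentiableOn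
    intro x hx
    rw [interior_Icc] at hx
    exact claimA x ⟨hx.1.le, hx.2.le⟩
  -- integral identity and lower bound on w L
  have hwL : h * (L - x1) / (a2 + q * (L - x1)) ≤ w L := by
    have hFx1 : F x1 = 0 := by simp only [hFdef]; exact hBC1
    have hFL : F L = -(a2 * w L) := by simp only [hFdef, hBC2]; ring
    have hint1 : ∫ x in x1..L, deriv F x = F L - F x1 :=
      intervalIntegral.integral_deriv_eq_sub (fun x _ => hFdiff x)
        (hFdcont.intervalIntegrable _ _)
    have huicc : Set.uIcc x1 L = Set.Icc x1 L := Set.uIcc_of_le hx1L.le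
    have hint2 : ∫ x in x1..L, deriv F x = ∫ x in x1..L, (q * w x - h) := by
      apply intervalIntegral.integral_congr
      rw [huicc]
      exact fun x hx => hODE' x hx
    have hwig : IntervalIntegrable w MeasureTheory.volume x1 L := hcw.intervalIntegrable _ _
    have hint3 : ∫ x in x1..L, (q * w x - h) = q * (∫ x in x1..L, w x) - (L - x1) * h := by
      rw [intervalIntegral.integral_sub (hwig.const_mul q) intervalIntegrable_const,
        intervalIntegral.integral_const_mul, intervalIntegral.integral_const]
      simp [smul_eq_mul]
    have hbound : (∫ x in x1..L, w x) ≤ (L - x1) * w L := by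
      have : (∫ x in x1..L, w x) ≤ ∫ x in x1..L, w L := by
        apply intervalIntegral.integral_mono_on hx1L.le hwig intervalIntegrable_const
        intro x hx
        exact hmono hx hmemL hx.2
      simpa [smul_eq_mul] using this
    have hkey : -(a2 * w L) = q * (∫ x in x1..L, w x) - (L - x1) * h := by
      rw [← hint3, ← hint2, hint1, hFL, hFx1]; ring
    have hden : 0 < a2 + q * (L - x1) := by nlinarith
    rw [div_le_iff₀ hden]
    nlinarith [hbound, hkey]
  -- exponential step
  intro x hx
  set C := h * (L - x1) / (a2 + q * (L - x1)) with hCdef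
  have hCpos : 0 < C := by
    have hden : 0 < a2 + q * (L - x1) := by nlinarith
    rw [hCdef]
    exact div_pos (by nlinarith) hden
  set u : ℝ → ℝ := fun y => w y * Real.exp (-(a2 / d2) * y) with hudef
  have hud : ∀ y : ℝ, HasDerivAt u
      (deriv w y * Real.exp (-(a2 / d2) * y) +
        w y * (Real.exp (-(a2 / d2) * y) * (-(a2 / d2)))) y := by
    intro y
    have he : HasDerivAt (fun z : ℝ => Real.exp (-(a2 / d2) * z))
        (Real.exp (-(a2 / d2) * y) * (-(a2 / d2))) y := by
      have := ((hasDerivAt_id y).const_mul (-(a2 / d2))).exp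
      simpa [mul_comm] using this
    exact ((hdw y).hasDerivAt.mul he)
  have hucont : Continuous u :=
    hcw.mul (Real.continuous_exp.comp (continuous_const.mul continuous_id))
  have hanti : AntitoneOn u (Set.Icc x1 L) := by
    apply antitoneOn_of_deriv_nonpos (convex_Icc _ _) hucont.continuousOn
      (fun y _ => (hud y).differentiableAt.differentiableWithinAt)
    intro y hy
    rw [interior_Icc] at hy
    rw [(hud y).deriv]
    have hFy : F y ≤ 0 := claimB y ⟨hy.1.le, hy.2.le⟩
    simp only [hFdef] at hFy
    have hE : 0 < Real.exp (-(a2 / d2) * y) := Real.exp_pos _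
    have hdwy : deriv w y ≤ a2 / d2 * w y := by
      rw [div_mul_eq_mul_div, le_div_iff₀ hd2]
      nlinarith
    nlinarith
  have hkey : u L ≤ u x := hanti hx hmemL hx.2
  simp only [hudef] at hkey
  have hxE : 0 < Real.exp (-(a2 / d2) * x) := Real.exp_pos _
  have hstep : w L * Real.exp (-(a2 / d2) * (L - x)) ≤ w x := by
    have h2 := mul_le_mul_of_nonneg_right hkey (le_of_lt (Real.exp_pos ((a2 / d2) * x)))
    calc w L * Real.exp (-(a2 / d2) * (L - x))
        = w L * Real.exp (-(a2 / d2) * L) * Real.exp ((a2 / d2) * x) := by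
          rw [mul_assoc, ← Real.exp_add]; ring_nf
      _ ≤ w x * Real.exp (-(a2 / d2) * x) * Real.exp ((a2 / d2) * x) := h2
      _ = w x := by rw [mul_assoc, ← Real.exp_add]; ring_nf; simp
  have hexple : Real.exp (-(a2 / d2) * (L - x1)) ≤ Real.exp (-(a2 / d2) * (L - x)) := by
    apply Real.exp_le_exp.mpr
    have hα : 0 < a2 / d2 := by positivity
    nlinarith [hx.1]
  calc C * Real.exp (-(a2 / d2) * (L - x1))
      ≤ w L * Real.exp (-(a2 / d2) * (L - x)) :=
        mul_le_mul hwL hexple (le_of_lt (Real.exp_pos _)) (le_of_lt (hpos L hmemL))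
    _ ≤ w x := hstep
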